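/- arXiv:1810.12231 — 5 statements merged into one kernel-verified Lean document; each statement's English description precedes it below -/
import Mathlib

section
/- Let A ∈ ℝ^{n×n}, B ∈ ℝ^{n×m}, C ∈ ℝ^{p×n}, Q ∈ ℝ^{p×p} symmetric positive definite, and λ ∈ ℂ purely imaginary. Assume (i) the pair (A,B) is stabilizable, i.e., rank[μI−A, B] = n for every μ ∈ ℂ with Re(μ) ≥ 0, and (ii) the Rosenbrock matrix [[λI−A, −B],[C, 0]] has full column rank n+m. Then the matrix P_H^y(λ) = [[0, λI−A, B],[−λI−Aᵀ, −Cᵀ Q C, 0],[−Bᵀ, 0, 0]] ∈ ℂ^{(2n+m)×(2n+m)} is invertible. -/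
/-!
If `P_H^y(λ) (x, y, u) = 0`, pairing the second block row with `y` and using the first and third
gives `(Cy)ᴴ Q (Cy) = yᴴ (λI − A)ᴴ x = −(Bu)ᴴ x = −uᴴ Bᵀ x = 0`, so `Cy = 0` as `Q > 0`. The
Rosenbrock rank condition then forces `y = 0, u = 0`, and `xᴴ [λI − A, B] = 0` together with the
Hautus condition at `λ` forces `x = 0`.
-/

open Matrix

/-- Hamiltonian matrix `P_H^y(λ) = [[0, λI−A, B], [−λI−Aᵀ, −CᵀQC, 0], [−Bᵀ, 0, 0]]`. -/
noncomputable def HamMatY {n m p : ℕ} (A : Matrix (Fin n) (Fin n) ℝ) (B : Matrix (Fin n) (Fin m) ℝ)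
    (C : Matrix (Fin p) (Fin n) ℝ) (Q : Matrix (Fin p) (Fin p) ℝ) (l : ℂ) :
    Matrix ((Fin n ⊕ Fin n) ⊕ Fin m) ((Fin n ⊕ Fin n) ⊕ Fin m) ℂ :=
  Matrix.fromBlocks
    (Matrix.fromBlocks 0 (l • 1 - A.map Complex.ofReal)
      (-(l • 1) - (A.map Complex.ofReal)ᵀ)
      (-((C.map Complex.ofReal)ᵀ * Q.map Complex.ofReal * C.map Complex.ofReal)))
    (Matrix.fromRows (B.map Complex.ofReal) 0)
    (Matrix.fromCols (-(B.map Complex.ofReal)ᵀ) 0) 0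

open scoped ComplexOrder

namespace Matrix

variable {ι κ ρ : Type*}

theorem mulVec_injective_of_rank_eq_card [Fintype ι] {K : Type*} [Field K] {M : Matrix ρ ι K}
    (h : M.rank = Fintype.card ι) : Function.Injective M.mulVec :=
  mulVec_injective_iff.mpr <| linearIndependent_iff_card_eq_finrank_span.mpr <| by
    rw [← h, rank_eq_finrank_span_cols, Set.finrank]

theorem eq_zero_of_rank_eq_card_of_mulVec_eq_zero [Fintype ι] {K : Type*} [Field K]
    {M : Matrix ρ ι K} (h : M.rank = Fintype.card ι) {v : ι → K} (hv : M *ᵥ v = 0) : v = 0 :=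
  mulVec_injective_of_rank_eq_card h (hv.trans (mulVec_zero M).symm)

theorem conjTranspose_map_ofReal (A : Matrix ρ ι ℝ) :
    (A.map ((↑) : ℝ → ℂ))ᴴ = (A.map ((↑) : ℝ → ℂ))ᵀ := by
  ext i j
  simp

theorem re_star_dotProduct_map_ofReal_mulVec [Fintype ι] (Q : Matrix ι ι ℝ) (z : ι → ℂ) :
    (star z ⬝ᵥ (Q.map ((↑) : ℝ → ℂ) *ᵥ z)).re =
      (fun i ↦ (z i).re) ⬝ᵥ (Q *ᵥ fun i ↦ (z i).re) +
        (fun i ↦ (z i).im) ⬝ᵥ (Q *ᵥ fun i ↦ (z i).im) := by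
  simp only [dotProduct, mulVec, Finset.mul_sum, Complex.re_sum, Pi.star_apply, map_apply,
    Complex.mul_re, Complex.mul_im, Complex.ofReal_re, Complex.ofReal_im, Complex.star_def,
    Complex.conj_re, Complex.conj_im, ← Finset.sum_add_distrib]
  refine Finset.sum_congr rfl fun i _ ↦ Finset.sum_congr rfl fun j _ ↦ ?_
  ring

theorem PosDef.map_ofReal [Fintype ι] {Q : Matrix ι ι ℝ} (hQ : Q.PosDef) :
    (Q.map ((↑) : ℝ → ℂ)).PosDef := by
  have hherm : (Q.map ((↑) : ℝ → ℂ)).IsHermitian :=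
    hQ.isHermitian.map _ fun r ↦ by simp
  refine .of_dotProduct_mulVec_pos hherm fun z hz ↦ Complex.pos_iff.mpr ⟨?_, ?_⟩
  · rw [re_star_dotProduct_map_ofReal_mulVec]
    have hre := hQ.posSemidef.dotProduct_mulVec_nonneg fun i ↦ (z i).re
    have him := hQ.posSemidef.dotProduct_mulVec_nonneg fun i ↦ (z i).im
    simp only [star_trivial] at hre him
    by_cases h : (fun i ↦ (z i).re) = 0
    · have : (fun i ↦ (z i).im) ≠ 0 := fun h' ↦ hz <| funext fun i ↦
        Complex.ext (congrFun h i) (congrFun h' i)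
      have := hQ.dotProduct_mulVec_pos this
      simp only [star_trivial] at this
      linarith
    · have := hQ.dotProduct_mulVec_pos h
      simp only [star_trivial] at this
      linarith
  · exact (hherm.im_star_dotProduct_mulVec_self z).symm

section RegulatorHamiltonian

variable {𝕜 : Type*} [RCLike 𝕜] [Fintype ι] [Fintype κ] [Fintype ρ]
  (M : Matrix ι ι 𝕜) (B : Matrix ι κ 𝕜) (C : Matrix ρ ι 𝕜) (Q : Matrix ρ ρ 𝕜)

/-- With `M = λI − A` for purely imaginary `λ`, the block `−λI − Aᵀ` of `P_H^y(λ)` is `Mᴴ`. -/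
def regulatorHamiltonian : Matrix ((ι ⊕ ι) ⊕ κ) ((ι ⊕ ι) ⊕ κ) 𝕜 :=
  fromBlocks (fromBlocks 0 M Mᴴ (-(Cᴴ * Q * C))) (fromRows B 0) (fromCols (-Bᴴ) 0) 0

variable {M B C Q}

theorem mulVec_eq_zero_of_regulatorEquations {x y : ι → 𝕜} {u : κ → 𝕜} (hQ : Q.PosDef)
    (h₁ : M *ᵥ y + B *ᵥ u = 0) (h₂ : Mᴴ *ᵥ x = (Cᴴ * Q * C) *ᵥ y) (h₃ : Bᴴ *ᵥ x = 0) :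
    C *ᵥ y = 0 := by
  have hMy : M *ᵥ y = -(B *ᵥ u) := eq_neg_of_add_eq_zero_left h₁
  have henergy : star (C *ᵥ y) ⬝ᵥ (Q *ᵥ (C *ᵥ y)) = 0 :=
    calc star (C *ᵥ y) ⬝ᵥ (Q *ᵥ (C *ᵥ y)) = star y ⬝ᵥ ((Cᴴ * Q * C) *ᵥ y) := by
          simp only [star_mulVec, dotProduct_mulVec, vecMul_vecMul, mulVec_mulVec, Matrix.mul_assoc]
      _ = star (M *ᵥ y) ⬝ᵥ x := by rw [← h₂, star_mulVec, dotProduct_mulVec]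
      _ = -(star u ⬝ᵥ (Bᴴ *ᵥ x)) := by
          rw [hMy, star_neg, neg_dotProduct, star_mulVec, dotProduct_mulVec]
      _ = 0 := by rw [h₃, dotProduct_zero, neg_zero]
  by_contra hne
  exact (hQ.dotProduct_mulVec_pos hne).ne' henergy

theorem eq_zero_of_regulatorEquations (hQ : Q.PosDef) (hMB : (fromCols M B).rank = Fintype.card ι)
    (hros : (fromBlocks M (-B) C (0 : Matrix ρ κ 𝕜)).rank = Fintype.card ι + Fintype.card κ)
    {x y : ι → 𝕜} {u : κ → 𝕜}
    (h₁ : M *ᵥ y + B *ᵥ u = 0) (h₂ : Mᴴ *ᵥ x = (Cᴴ * Q * C) *ᵥ y) (h₃ : Bᴴ *ᵥ x = 0) :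
    x = 0 ∧ y = 0 ∧ u = 0 := by
  have hCy := mulVec_eq_zero_of_regulatorEquations hQ h₁ h₂ h₃
  have hyu : Sum.elim y (-u) = 0 := by
    refine eq_zero_of_rank_eq_card_of_mulVec_eq_zero (by rw [hros, Fintype.card_sum]) ?_
    simp [fromBlocks_mulVec, hCy, neg_mulVec, mulVec_neg, h₁]
  have hy : y = 0 := by simpa using congrArg (· ∘ Sum.inl) hyu
  have hu : u = 0 := by simpa using congrArg (· ∘ Sum.inr) hyu
  refine ⟨eq_zero_of_rank_eq_card_of_mulVec_eq_zero (M := (fromCols M B)ᴴ)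
    (by rw [rank_conjTranspose, hMB]) ?_, hy, hu⟩
  simp [conjTranspose_fromCols_eq_fromRows_conjTranspose, fromRows_mulVec, h₂, hy, h₃]

theorem isUnit_regulatorHamiltonian [DecidableEq ι] [DecidableEq κ] (hQ : Q.PosDef)
    (hMB : (fromCols M B).rank = Fintype.card ι)
    (hros : (fromBlocks M (-B) C (0 : Matrix ρ κ 𝕜)).rank = Fintype.card ι + Fintype.card κ) :
    IsUnit (regulatorHamiltonian M B C Q) := by
  refine mulVec_injective_iff_isUnit.mp <|
    (injective_iff_map_eq_zero (regulatorHamiltonian M B C Q).mulVecLin).mpr fun v hv ↦ ?_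
  obtain ⟨⟨⟨x, y⟩, u⟩, rfl⟩ : ∃ w : ((ι → 𝕜) × (ι → 𝕜)) × (κ → 𝕜), v = (w.1.1 ⊕ᵥ w.1.2) ⊕ᵥ w.2 :=
    ⟨((v ∘ Sum.inl ∘ Sum.inl, v ∘ Sum.inl ∘ Sum.inr), v ∘ Sum.inr), by ext ((i | i) | i) <;> rfl⟩
  simp only [regulatorHamiltonian, mulVecLin_apply, fromBlocks_mulVec, fromRows_mulVec,
    fromCols_mulVec_sumElim, Sum.elim_comp_inl, Sum.elim_comp_inr, zero_mulVec, add_zero,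
    zero_add, ← Sum.elim_zero_zero, ← Sum.elim_add_add, Sum.elim_eq_iff, neg_mulVec,
    add_neg_eq_zero, neg_eq_zero] at hv
  obtain ⟨⟨h₁, h₂⟩, h₃⟩ := hv
  obtain ⟨rfl, rfl, rfl⟩ := eq_zero_of_regulatorEquations hQ hMB hros h₁ h₂ h₃
  simp

end RegulatorHamiltonian

end Matrix

theorem HamMatY_eq_regulatorHamiltonian {n m p : ℕ} (A : Matrix (Fin n) (Fin n) ℝ)
    (B : Matrix (Fin n) (Fin m) ℝ) (C : Matrix (Fin p) (Fin n) ℝ) (Q : Matrix (Fin p) (Fin p) ℝ)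
    {l : ℂ} (hl : l.re = 0) :
    HamMatY A B C Q l =
      regulatorHamiltonian (l • 1 - A.map (↑)) (B.map (↑)) (C.map (↑)) (Q.map (↑)) := by
  have hconj : star l = -l := Complex.ext (by simp [hl]) (by simp)
  simp [HamMatY, regulatorHamiltonian, conjTranspose_map_ofReal, hconj]

/-- Under stabilizability of `(A,B)` and full column rank of the Rosenbrock matrix at a
purely imaginary `λ`, the Hamiltonian matrix `P_H^y(λ)` is invertible. -/
theorem stmt2 {n m p : ℕ} (A : Matrix (Fin n) (Fin n) ℝ) (B : Matrix (Fin n) (Fin m) ℝ)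
    (C : Matrix (Fin p) (Fin n) ℝ) (Q : Matrix (Fin p) (Fin p) ℝ)
    (hQ : Q.PosDef) (l : ℂ) (hl : l.re = 0)
    (hstab : ∀ μ : ℂ, 0 ≤ μ.re →
      (Matrix.fromCols (μ • 1 - A.map Complex.ofReal) (B.map Complex.ofReal)).rank = n)
    (hrank : (Matrix.fromBlocks (l • 1 - A.map Complex.ofReal) (-(B.map Complex.ofReal))
        (C.map Complex.ofReal) (0 : Matrix (Fin p) (Fin m) ℂ)).rank = n + m) :
    IsUnit (HamMatY A B C Q l) := by
  rw [HamMatY_eq_regulatorHamiltonian A B C Q hl]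
  exact isUnit_regulatorHamiltonian hQ.map_ofReal (by simpa using hstab l hl.symm.le)
    (by simpa using hrank)
end

section
/- Let A ∈ ℝ^{n×n}, B ∈ ℝ^{n×m}, C ∈ ℝ^{p×n}, Q ∈ ℝ^{p×p} symmetric positive definite, λ ∈ ℂ purely imaginary, and suppose (A,B) is stabilizable. If the matrix P_H^y(λ) = [[0, λI−A, B],[−λI−Aᵀ, −CᵀQC, 0],[−Bᵀ, 0, 0]] is invertible, then the Rosenbrock matrix [[λI−A, −B],[C, 0]] has full column rank n+m. -/
/-!
If `(x, u)` lies in the kernel of the Rosenbrock matrix, i.e. `(λI - A)x = Bu` and `Cx = 0`, then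
`(0, x, -u)` lies in the kernel of `P_H^y(λ)`: its first block row is `(λI - A)x - Bu`, its second
`-CᵀQCx`, and its third `-Bᵀ0`. Hence invertibility of `P_H^y(λ)` forces `(x, u) = 0`.
-/

open Matrix

theorem Sum.elim_eq_zero_iff {α β γ : Type*} [Zero γ] {f : α → γ} {g : β → γ} :
    Sum.elim f g = 0 ↔ f = 0 ∧ g = 0 := by
  rw [← Sum.elim_zero_zero, Sum.elim_eq_iff]

theorem Matrix.rank_eq_card_of_mulVec_injective {m n R : Type*} [Fintype n] [CommRing R]
    [StrongRankCondition R] {M : Matrix m n R} (h : Function.Injective M.mulVec) :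
    M.rank = Fintype.card n := by
  rw [rank, LinearMap.finrank_range_of_inj h, Module.finrank_fintype_fun_eq_card]

theorem HamMatY_mulVec_eq_zero_of_rosenbrock {n m p : ℕ} (A : Matrix (Fin n) (Fin n) ℝ)
    (B : Matrix (Fin n) (Fin m) ℝ) (C : Matrix (Fin p) (Fin n) ℝ) (Q : Matrix (Fin p) (Fin p) ℝ)
    (l : ℂ) {x : Fin n → ℂ} {u : Fin m → ℂ}
    (hv : fromBlocks (l • 1 - A.map Complex.ofReal) (-(B.map Complex.ofReal))
        (C.map Complex.ofReal) (0 : Matrix (Fin p) (Fin m) ℂ) *ᵥ Sum.elim x u = 0) :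
    HamMatY A B C Q l *ᵥ Sum.elim (Sum.elim 0 x) (-u) = 0 := by
  obtain ⟨hx, hCx⟩ : (l • 1 - A.map Complex.ofReal) *ᵥ x - B.map Complex.ofReal *ᵥ u = 0 ∧
      C.map Complex.ofReal *ᵥ x = 0 := by
    simpa [fromBlocks_mulVec, neg_mulVec, ← sub_eq_add_neg, Sum.elim_eq_zero_iff] using hv
  have hCQCx : ((C.map Complex.ofReal)ᵀ * Q.map Complex.ofReal * C.map Complex.ofReal) *ᵥ x = 0 := by
    rw [← mulVec_mulVec, hCx, mulVec_zero]
  simp [HamMatY, fromBlocks_mulVec, fromRows_mulVec, neg_mulVec, mulVec_neg, ← sub_eq_add_neg,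
    ← Sum.elim_sub_sub, hx, hCQCx]

theorem stmt3_general {n m p : ℕ} (A : Matrix (Fin n) (Fin n) ℝ) (B : Matrix (Fin n) (Fin m) ℝ)
    (C : Matrix (Fin p) (Fin n) ℝ) (Q : Matrix (Fin p) (Fin p) ℝ)
    (l : ℂ)
    (hinv : IsUnit (HamMatY A B C Q l)) :
    (Matrix.fromBlocks (l • 1 - A.map Complex.ofReal) (-(B.map Complex.ofReal))
        (C.map Complex.ofReal) (0 : Matrix (Fin p) (Fin m) ℂ)).rank = n + m := by
  rw [rank_eq_card_of_mulVec_injective, Fintype.card_sum, Fintype.card_fin, Fintype.card_fin]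
  refine (injective_iff_map_eq_zero (mulVecLin _)).2 fun v hv => ?_
  rw [← Sum.elim_comp_inl_inr v] at hv ⊢
  have hw := (mulVec_injective_iff_isUnit.2 hinv).eq_iff.1 <|
    (HamMatY_mulVec_eq_zero_of_rosenbrock A B C Q l hv).trans (mulVec_zero _).symm
  obtain ⟨h0x, hu⟩ := Sum.elim_eq_zero_iff.1 hw
  obtain ⟨_, hx⟩ := Sum.elim_eq_zero_iff.1 h0x
  exact Sum.elim_eq_zero_iff.2 ⟨hx, neg_eq_zero.1 hu⟩

/-- If `P_H^y(λ)` is invertible (with `(A,B)` stabilizable, `Q ≻ 0`, `λ` purely imaginary),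
then the Rosenbrock matrix has full column rank `n + m`. -/
theorem stmt3 {n m p : ℕ} (A : Matrix (Fin n) (Fin n) ℝ) (B : Matrix (Fin n) (Fin m) ℝ)
    (C : Matrix (Fin p) (Fin n) ℝ) (Q : Matrix (Fin p) (Fin p) ℝ)
    (hQ : Q.PosDef) (l : ℂ) (hl : l.re = 0)
    (hstab : ∀ μ : ℂ, 0 ≤ μ.re →
      (Matrix.fromCols (μ • 1 - A.map Complex.ofReal) (B.map Complex.ofReal)).rank = n)
    (hinv : IsUnit (HamMatY A B C Q l)) :
    (Matrix.fromBlocks (l • 1 - A.map Complex.ofReal) (-(B.map Complex.ofReal))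
        (C.map Complex.ofReal) (0 : Matrix (Fin p) (Fin m) ℂ)).rank = n + m :=
  stmt3_general A B C Q l hinv
end

section
/- Let Ā ∈ ℝ^{n̄×n̄} be diagonalizable with all eigenvalues purely imaginary, and let G ∈ ℝ^{g×n̄}. Suppose the pair (G, Ā) is completely observable. Then for every x̄₀ ∈ ℝ^{n̄} with x̄₀ ≠ 0, the limit lim_{T→∞} (1/T) ∫₀^T ‖G e^{Āt} x̄₀‖² dt exists and is strictly positive. -/
/-!
Complexify and diagonalise `Ā = P D P⁻¹`. Splitting `x̄₀` into its components `v_ω` in the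
eigenspaces of `Ā`, the output is the trigonometric polynomial `∑_ω e^{ωt} G v_ω`. Its squared
norm is a sum of terms `e^{(ω - ω')t}`, whose time averages vanish unless `ω = ω'`, so the
average power tends to `∑_ω ‖G v_ω‖²`. Since the `v_ω` sum to `x̄₀ ≠ 0`, some `v_ω` is a nonzero
eigenvector, and observability makes `G v_ω ≠ 0`.
-/

open Filter Topology Complex ComplexConjugate Matrix

lemma norm_cexp_mul_ofReal {μ : ℂ} (hμ : μ.re = 0) (t : ℝ) : ‖cexp (μ * t)‖ = 1 := by
  simp [Complex.norm_exp, hμ]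

lemma tendsto_average_cexp {μ : ℂ} (hμ : μ.re = 0) :
    Tendsto (fun T : ℝ => (T : ℂ)⁻¹ * ∫ t in (0 : ℝ)..T, cexp (μ * t)) atTop
      (𝓝 (if μ = 0 then 1 else 0)) := by
  split_ifs with h
  · refine tendsto_const_nhds.congr' ?_
    filter_upwards [eventually_ne_atTop 0] with T hT
    simp [h, ofReal_ne_zero.mpr hT]
  · have hinv : Tendsto (fun T : ℝ => (T : ℂ)⁻¹) atTop (𝓝 0) := by
      simpa using (tendsto_inv_atTop_zero (𝕜 := ℝ)).ofReal
    refine (hinv.zero_mul_isBoundedUnder_le (isBoundedUnder_of ⟨2 / ‖μ‖, fun T => ?_⟩))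
    rw [Function.comp_apply, integral_exp_mul_complex h, norm_div]
    gcongr
    calc ‖cexp (μ * T) - cexp (μ * (0 : ℝ))‖
        ≤ ‖cexp (μ * T)‖ + ‖cexp (μ * (0 : ℝ))‖ := norm_sub_le _ _
      _ = 2 := by rw [norm_cexp_mul_ofReal hμ, norm_cexp_mul_ofReal hμ]; norm_num

lemma tendsto_average_sum_cexp {κ : Type*} (K : Finset κ) (a μ : κ → ℂ)
    (hμ : ∀ k ∈ K, (μ k).re = 0) :
    Tendsto (fun T : ℝ => (T : ℂ)⁻¹ * ∫ t in (0 : ℝ)..T, ∑ k ∈ K, a k * cexp (μ k * t)) atTop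
      (𝓝 (∑ k ∈ K, if μ k = 0 then a k else 0)) := by
  have hcont : ∀ k, Continuous fun t : ℝ => a k * cexp (μ k * t) := fun k => by fun_prop
  simp_rw [intervalIntegral.integral_finsetSum fun k _ => (hcont k).intervalIntegrable 0 _,
    intervalIntegral.integral_const_mul, Finset.mul_sum, mul_left_comm _ (a _)]
  refine tendsto_finsetSum _ fun k hk => ?_
  simpa using (tendsto_average_cexp (hμ k hk)).const_mul (a k)

lemma conj_cexp_mul_ofReal {μ : ℂ} (hμ : μ.re = 0) (t : ℝ) :
    conj (cexp (μ * t)) = cexp (-μ * t) := by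
  rw [← Complex.exp_conj, map_mul, conj_ofReal]
  congr 2
  apply Complex.ext <;> simp [hμ]

lemma ofReal_norm_sq_sum_mul_cexp {s : Finset ℂ} (hs : ∀ ω ∈ s, ω.re = 0) (u : ℂ → ℂ) (t : ℝ) :
    ((‖∑ ω ∈ s, u ω * cexp (ω * t)‖ ^ 2 : ℝ) : ℂ)
      = ∑ p ∈ s ×ˢ s, u p.1 * conj (u p.2) * cexp ((p.1 - p.2) * t) := by
  rw [ofReal_pow, ← mul_conj', map_sum, Finset.sum_mul_sum, Finset.sum_product]
  refine Finset.sum_congr rfl fun ω _ => Finset.sum_congr rfl fun ν hν => ?_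
  rw [map_mul, conj_cexp_mul_ofReal (hs ν hν), sub_eq_add_neg, add_mul, Complex.exp_add]
  ring

lemma tendsto_average_sum_norm_sq_sum_cexp {ι : Type*} [Fintype ι] {s : Finset ℂ}
    (hs : ∀ ω ∈ s, ω.re = 0) (u : ι → ℂ → ℂ) :
    Tendsto (fun T : ℝ => T⁻¹ * ∫ t in (0 : ℝ)..T, ∑ i, ‖∑ ω ∈ s, u i ω * cexp (ω * t)‖ ^ 2)
      atTop (𝓝 (∑ i, ∑ ω ∈ s, ‖u i ω‖ ^ 2)) := by
  rw [← tendsto_ofReal_iff]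
  have hμ : ∀ q ∈ (Finset.univ : Finset ι) ×ˢ (s ×ˢ s), (q.2.1 - q.2.2 : ℂ).re = 0 := by
    intro q hq
    simp only [Finset.mem_product] at hq
    simp [hs _ hq.2.1, hs _ hq.2.2]
  have hlim := tendsto_average_sum_cexp _ (fun q : ι × ℂ × ℂ => u q.1 q.2.1 * conj (u q.1 q.2.2))
    (fun q => q.2.1 - q.2.2) hμ
  convert hlim using 2 with T
  · rw [ofReal_mul, ofReal_inv, ← intervalIntegral.integral_ofReal]
    congr 2 with t
    rw [ofReal_sum, Finset.sum_product]
    exact Finset.sum_congr rfl fun i _ => ofReal_norm_sq_sum_mul_cexp hs (u i) t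
  · rw [ofReal_sum, Finset.sum_product]
    refine Finset.sum_congr rfl fun i _ => ?_
    rw [ofReal_sum, Finset.sum_product]
    refine Finset.sum_congr rfl fun ω hω => ?_
    simp [sub_eq_zero, mul_conj', hω]

namespace Matrix

section Spectral

variable {n K : Type*} [Fintype n] [DecidableEq n] [CommRing K] [DecidableEq K]

/-- For `A = P * diagonal d * P⁻¹`, the component of `x` in the `ω`-eigenspace of `A`. -/
noncomputable def spectralComponent (P : Matrix n n K) (d : n → K) (x : n → K) (ω : K) : n → K :=
  P *ᵥ fun j => if d j = ω then (P⁻¹ *ᵥ x) j else 0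

variable {P : Matrix n n K} (d : n → K)

lemma sum_spectralComponent (hP : IsUnit P) (x : n → K) :
    ∑ ω ∈ Finset.univ.image d, spectralComponent P d x ω = x := by
  have hsplit : ∑ ω ∈ Finset.univ.image d, (fun j => if d j = ω then (P⁻¹ *ᵥ x) j else 0)
      = P⁻¹ *ᵥ x := by
    ext j
    simp [Finset.sum_apply, Finset.sum_ite_eq]
  simp only [spectralComponent]
  rw [← mulVec_sum, hsplit, mulVec_mulVec,
    mul_nonsing_inv P ((isUnit_iff_isUnit_det P).mp hP), one_mulVec]

lemma conj_diagonal_mulVec_spectralComponent (hP : IsUnit P) (f : K → K) (x : n → K) (ω : K) :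
    (P * diagonal (fun j => f (d j)) * P⁻¹) *ᵥ spectralComponent P d x ω
      = f ω • spectralComponent P d x ω := by
  rw [spectralComponent, mulVec_mulVec, Matrix.mul_assoc _ P⁻¹,
    nonsing_inv_mul P ((isUnit_iff_isUnit_det P).mp hP), Matrix.mul_one, ← mulVec_mulVec,
    ← mulVec_smul]
  congr 1
  ext j
  rw [mulVec_diagonal]
  split_ifs with h <;> simp [h]

lemma exists_mulVec_spectralComponent_ne_zero {m : Type*} (C : Matrix m n K)
    (hP : IsUnit P)
    (hobs : ∀ (ω : K) (v : n → K), (P * diagonal d * P⁻¹) *ᵥ v = ω • v → C *ᵥ v = 0 → v = 0)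
    {x : n → K} (hx : x ≠ 0) :
    ∃ ω ∈ Finset.univ.image d, C *ᵥ spectralComponent P d x ω ≠ 0 := by
  by_contra! h
  refine hx ?_
  rw [← sum_spectralComponent d hP x]
  refine Finset.sum_eq_zero fun ω hω => hobs ω _ ?_ (h ω hω)
  exact conj_diagonal_mulVec_spectralComponent d hP id x ω

end Spectral

lemma map_ofReal_exp {n : Type*} [Fintype n] [DecidableEq n] (B : Matrix n n ℝ) :
    (NormedSpace.exp B).map ofReal = NormedSpace.exp (B.map ofReal) := by
  -- `NormedSpace.exp` does not depend on the norm, so any normed-algebra structure will do.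
  let _ : NormedRing (Matrix n n ℝ) := Matrix.linftyOpNormedRing
  let _ : NormedAlgebra ℝ (Matrix n n ℝ) := Matrix.linftyOpNormedAlgebra
  let _ : NormedRing (Matrix n n ℂ) := Matrix.linftyOpNormedRing
  let _ : NormedAlgebra ℂ (Matrix n n ℂ) := Matrix.linftyOpNormedAlgebra
  let _ : NormedAlgebra ℚ (Matrix n n ℝ) := NormedAlgebra.restrictScalars ℚ ℝ _
  exact NormedSpace.map_exp (ofRealHom.mapMatrix : Matrix n n ℝ →+* Matrix n n ℂ)
    (continuous_id.matrix_map continuous_ofReal) B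

lemma exp_smul_conj_diagonal {n : Type*} [Fintype n] [DecidableEq n]
    {P : Matrix n n ℂ} (hP : IsUnit P) (d : n → ℂ) (t : ℝ) :
    NormedSpace.exp ((t : ℂ) • (P * diagonal d * P⁻¹))
      = P * diagonal (fun j => cexp (d j * t)) * P⁻¹ := by
  rw [← smul_mul_assoc, ← mul_smul_comm, ← diagonal_smul, exp_conj P _ hP, exp_diagonal]
  simp only [Pi.exp_def, Pi.smul_apply, smul_eq_mul, ← Complex.exp_eq_exp_ℂ, mul_comm]

lemma ofReal_comp_mulVec {m n : Type*} [Fintype n] (M : Matrix m n ℝ) (y : n → ℝ) :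
    ofReal ∘ (M *ᵥ y) = M.map ofReal *ᵥ (ofReal ∘ y) :=
  funext (ofRealHom.map_mulVec M y)

lemma ofReal_mulVec_exp_mulVec {m n : Type*} [Fintype n] [DecidableEq n]
    {A : Matrix n n ℝ} {P : Matrix n n ℂ} (hP : IsUnit P) {d : n → ℂ}
    (hA : A.map ofReal = P * diagonal d * P⁻¹) (C : Matrix m n ℝ) (x : n → ℝ) (t : ℝ) (i : m) :
    ((C *ᵥ (NormedSpace.exp (t • A) *ᵥ x)) i : ℂ)
      = ∑ ω ∈ Finset.univ.image d,
          (C.map ofReal *ᵥ spectralComponent P d (ofReal ∘ x) ω) i * cexp (ω * t) := by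
  have hexp : (NormedSpace.exp (t • A)).map ofReal
      = P * diagonal (fun j => cexp (d j * t)) * P⁻¹ := by
    rw [map_ofReal_exp, ← exp_smul_conj_diagonal hP, ← hA]
    congr 1
    ext
    simp
  rw [← Function.comp_apply (f := ofReal), ofReal_comp_mulVec, ofReal_comp_mulVec, hexp]
  conv_lhs => rw [← sum_spectralComponent d hP (ofReal ∘ x), mulVec_sum, mulVec_sum,
    Finset.sum_apply]
  refine Finset.sum_congr rfl fun ω _ => ?_
  rw [conj_diagonal_mulVec_spectralComponent d hP (fun ω => cexp (ω * t)), mulVec_smul,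
    Pi.smul_apply, smul_eq_mul, mul_comm]
end Matrix

/-- If `Ā` is diagonalizable with purely imaginary spectrum and `(G, Ā)` is completely
observable, then the average output power is well-defined and strictly positive for every
nonzero initial condition. -/
theorem stmt4 {nb g : ℕ} (Ab : Matrix (Fin nb) (Fin nb) ℝ) (G : Matrix (Fin g) (Fin nb) ℝ)
    (hdiag : ∃ (P : Matrix (Fin nb) (Fin nb) ℂ) (d : Fin nb → ℂ),
      IsUnit P ∧ (∀ i, (d i).re = 0) ∧
        Ab.map Complex.ofReal = P * Matrix.diagonal d * P⁻¹)
    (hobs : ∀ (μ : ℂ) (v : Fin nb → ℂ), (Ab.map Complex.ofReal).mulVec v = μ • v →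
      (G.map Complex.ofReal).mulVec v = 0 → v = 0)
    (x0 : Fin nb → ℝ) (hx0 : x0 ≠ 0) :
    ∃ L : ℝ, 0 < L ∧
      Filter.Tendsto
        (fun T : ℝ => (1 / T) *
          ∫ t in (0:ℝ)..T, ∑ i, (G.mulVec ((NormedSpace.exp (t • Ab)).mulVec x0) i) ^ 2)
        Filter.atTop (nhds L) := by
  obtain ⟨P, d, hP, hre, hA⟩ := hdiag
  let u : Fin g → ℂ → ℂ := fun i ω => (G.map ofReal *ᵥ spectralComponent P d (ofReal ∘ x0) ω) i
  have hs : ∀ ω ∈ Finset.univ.image d, ω.re = 0 := by simpa using hre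
  have hx0' : ofReal ∘ x0 ≠ 0 := fun h => hx0 (funext fun j => ofReal_injective (congrFun h j))
  obtain ⟨ω, hω, hne⟩ :=
    exists_mulVec_spectralComponent_ne_zero d (G.map ofReal) hP (hA ▸ hobs) hx0'
  obtain ⟨i, hi⟩ := Function.ne_iff.mp hne
  refine ⟨∑ i, ∑ ω ∈ Finset.univ.image d, ‖u i ω‖ ^ 2, ?_, ?_⟩
  · refine Finset.sum_pos' (fun _ _ => by positivity) ⟨i, Finset.mem_univ _, ?_⟩
    exact Finset.sum_pos' (fun _ _ => by positivity) ⟨ω, hω, pow_pos (norm_pos_iff.mpr hi) 2⟩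
  · convert tendsto_average_sum_norm_sq_sum_cexp hs u using 4
    · rw [one_div]
    funext t
    refine Finset.sum_congr rfl fun i _ => ?_
    rw [← ofReal_mulVec_exp_mulVec hP hA, norm_real, Real.norm_eq_abs, sq_abs]
end

section
/- Let A ∈ ℝ^{n×n}, B ∈ ℝ^{n×m}, C ∈ ℝ^{p×n}, E_d ∈ ℝ^{n×n̄}, D_d ∈ ℝ^{p×n̄}, C̄ ∈ ℝ^{p×n̄}, Ā ∈ ℝ^{n̄×n̄}, and R ∈ ℝ^{m×m} symmetric positive definite. Suppose all eigenvalues of Ā are purely imaginary and Ā is diagonalizable. Then there exist matrices Π ∈ ℝ^{n×n̄}, Γ ∈ ℝ^{m×n̄} solving the classical regulator equations Π Ā = A Π + B Γ + E_d and C̄ = C Π + D_d if and only if there exist matrices Πᵘ ∈ ℝ^{n×n̄}, Λᵘ ∈ ℝ^{n×n̄}, Γ̄ᵘ ∈ ℝ^{p×n̄} solving the new regulator equations Λᵘ Ā = −Aᵀ Λᵘ + Cᵀ Γ̄ᵘ, Πᵘ Ā = A Πᵘ − B R⁻¹ Bᵀ Λᵘ + E_d, and C̄ = C Πᵘ + D_d.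 -/
/-!
The converse implication is the substitution `Γ = -R⁻¹ Bᵀ Λᵘ`. For the direct one, diagonalise
`Ā = P diag(d) P⁻¹` over `ℂ`: after right multiplication by `P` the equations decouple into one
linear system per eigenvalue `d`, and `star d = -d` makes `(A - d)ᴴ = Aᴴ + d`, so the new
equations for that column are the Lagrange conditions of minimising `γᴴ R γ` over the solutions
`(π, γ)` of the classical ones. They are solvable by a Fredholm-alternative argument in which the
positivity of `R⁻¹` kills every obstruction. Real parts of the complex solutions then solve the
real equations, since all the data are real.
-/

open Matrix
open scoped ComplexOrder

theorem Submodule.mem_of_forall_star_dotProduct_eq_zero {𝕜 ι : Type*} [Field 𝕜] [StarRing 𝕜]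
    [Fintype ι] {S : Submodule 𝕜 (ι → 𝕜)} {v : ι → 𝕜}
    (h : ∀ y : ι → 𝕜, (∀ s ∈ S, star y ⬝ᵥ s = 0) → star y ⬝ᵥ v = 0) : v ∈ S := by
  classical
  by_contra hv
  obtain ⟨f, hfv, hfS⟩ := S.exists_dual_map_eq_bot_of_notMem hv inferInstance
  obtain ⟨c, rfl⟩ := (dotProductEquiv 𝕜 ι).surjective f
  refine hfv ?_
  simpa using h (star c) fun s hs => by
    simpa using (Submodule.eq_bot_iff _).mp hfS _ (Submodule.mem_map_of_mem hs)

theorem Matrix.star_dotProduct_mulVec {α m n : Type*} [CommSemiring α] [StarRing α] [Fintype m]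
    [Fintype n] (M : Matrix m n α) (y : m → α) (v : n → α) :
    star y ⬝ᵥ (M *ᵥ v) = star (Mᴴ *ᵥ y) ⬝ᵥ v := by
  rw [star_mulVec, dotProduct_mulVec, conjTranspose_conjTranspose]

/-- The Lagrange conditions, with multiplier `y`, of minimising `star u ⬝ᵥ W⁻¹ *ᵥ u` subject to
`F *ᵥ x + K *ᵥ u = b`. -/
theorem Matrix.exists_eq_mulVec_add_mulVec_posDef_conjTranspose {𝕜 ι κ μ : Type*} [RCLike 𝕜]
    [Fintype ι] [Fintype κ] [Fintype μ] (F : Matrix ι κ 𝕜) (K : Matrix ι μ 𝕜)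
    {W : Matrix μ μ 𝕜} (hW : W.PosDef) (x : κ → 𝕜) (u : μ → 𝕜) :
    ∃ x' y, Fᴴ *ᵥ y = 0 ∧ F *ᵥ x + K *ᵥ u = F *ᵥ x' + K *ᵥ (W *ᵥ (Kᴴ *ᵥ y)) := by
  let S := LinearMap.range F.mulVecLin ⊔
    (LinearMap.ker Fᴴ.mulVecLin).map (K * W * Kᴴ).mulVecLin
  have hmem : F *ᵥ x + K *ᵥ u ∈ S := by
    refine Submodule.mem_of_forall_star_dotProduct_eq_zero fun y hy => ?_
    have hF : Fᴴ *ᵥ y = 0 := by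
      have := hy _ (Submodule.mem_sup_left ⟨Fᴴ *ᵥ y, rfl⟩)
      rwa [mulVecLin_apply, star_dotProduct_mulVec, dotProduct_star_self_eq_zero] at this
    have hK : Kᴴ *ᵥ y = 0 := by
      by_contra hne
      have := hy _ (Submodule.mem_sup_right (Submodule.mem_map_of_mem (p := _) hF))
      rw [mulVecLin_apply, ← mulVec_mulVec, ← mulVec_mulVec, star_dotProduct_mulVec] at this
      exact (hW.dotProduct_mulVec_pos hne).ne' this
    rw [dotProduct_add, star_dotProduct_mulVec, star_dotProduct_mulVec, hF, hK]
    simp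
  obtain ⟨_, ⟨x', rfl⟩, _, ⟨y, hy, rfl⟩, h⟩ := Submodule.mem_sup.mp hmem
  exact ⟨x', y, hy, by simpa [mulVec_mulVec] using h.symm⟩

theorem exists_costate_of_smul_eq {𝕜 n m p : Type*} [RCLike 𝕜] [Fintype n] [Fintype m]
    [Fintype p] [DecidableEq n] (A : Matrix n n 𝕜) (B : Matrix n m 𝕜) (C : Matrix p n 𝕜)
    {W : Matrix m m 𝕜} (hW : W.PosDef) {d : 𝕜} (hd : star d = -d) {e : n → 𝕜} {c : p → 𝕜}
    {π : n → 𝕜} {γ : m → 𝕜} (hπ : d • π = A *ᵥ π + B *ᵥ γ + e) (hc : C *ᵥ π = c) :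
    ∃ (πu lam : n → 𝕜) (g : p → 𝕜), d • lam = -(Aᴴ *ᵥ lam) + Cᴴ *ᵥ g ∧
      d • πu = A *ᵥ πu - (B * W * Bᴴ) *ᵥ lam + e ∧ C *ᵥ πu = c := by
  obtain ⟨x, y, hy, hx⟩ := exists_eq_mulVec_add_mulVec_posDef_conjTranspose
    (fromRows (A - d • 1) C) (fromRows B 0) hW π γ
  obtain ⟨y₁, y₂, rfl⟩ : ∃ y₁ y₂, y = Sum.elim y₁ y₂ :=
    ⟨y ∘ Sum.inl, y ∘ Sum.inr, (Sum.elim_comp_inl_inr y).symm⟩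
  simp only [conjTranspose_fromRows_eq_fromCols_conjTranspose, fromCols_mulVec_sumElim,
    fromRows_mulVec, conjTranspose_zero, zero_mulVec, add_zero, sub_mulVec, smul_mulVec,
    one_mulVec, conjTranspose_sub, conjTranspose_smul, conjTranspose_one, hd] at hy hx
  have h₁ : A *ᵥ π - d • π + B *ᵥ γ = A *ᵥ x - d • x + B *ᵥ W *ᵥ Bᴴ *ᵥ y₁ :=
    funext fun i => by simpa using congrFun hx (Sum.inl i)
  have h₂ : C *ᵥ π = C *ᵥ x := funext fun i => by simpa using congrFun hx (Sum.inr i)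
  refine ⟨x, -y₁, y₂, ?_, ?_, h₂ ▸ hc⟩
  · simp only [mulVec_neg]
    linear_combination (norm := module) -hy
  · rw [mulVec_neg, ← mulVec_mulVec, ← mulVec_mulVec]
    linear_combination (norm := module) h₁ + hπ

theorem exists_costate_of_mul_diagonal_eq {𝕜 n m p k : Type*} [RCLike 𝕜] [Fintype n]
    [Fintype m] [Fintype p] [Fintype k] [DecidableEq n] [DecidableEq k] (A : Matrix n n 𝕜)
    (B : Matrix n m 𝕜) (C : Matrix p n 𝕜) {W : Matrix m m 𝕜} (hW : W.PosDef) {d : k → 𝕜}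
    (hd : ∀ j, star (d j) = -d j) {E : Matrix n k 𝕜} {Cb : Matrix p k 𝕜} {Pi' : Matrix n k 𝕜}
    {Γ : Matrix m k 𝕜} (hPi : Pi' * diagonal d = A * Pi' + B * Γ + E) (hC : C * Pi' = Cb) :
    ∃ (Piu Λ : Matrix n k 𝕜) (G : Matrix p k 𝕜), Λ * diagonal d = -(Aᴴ * Λ) + Cᴴ * G ∧
      Piu * diagonal d = A * Piu - B * W * Bᴴ * Λ + E ∧ C * Piu = Cb := by
  choose πu lam g h₁ h₂ h₃ using fun j => exists_costate_of_smul_eq A B C hW (hd j)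
    (π := Pi'ᵀ j) (γ := Γᵀ j) (funext fun i => by
      have := congrFun (congrFun hPi i) j
      rwa [mul_diagonal, mul_comm] at this)
    (funext fun i => congrFun (congrFun hC i) j)
  refine ⟨(of πu)ᵀ, (of lam)ᵀ, (of g)ᵀ, ?_, ?_, ?_⟩ <;> ext i j
  · rw [mul_diagonal, mul_comm]
    exact congrFun (h₁ j) i
  · rw [mul_diagonal, mul_comm]
    exact congrFun (h₂ j) i
  · exact congrFun (h₃ j) i

theorem exists_costate_of_eq_mul_diagonal_mul_inv {𝕜 n m p k : Type*} [RCLike 𝕜] [Fintype n]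
    [Fintype m] [Fintype p] [Fintype k] [DecidableEq n] [DecidableEq k] (A : Matrix n n 𝕜)
    (B : Matrix n m 𝕜) (C : Matrix p n 𝕜) {W : Matrix m m 𝕜} (hW : W.PosDef)
    {Ab P : Matrix k k 𝕜} (hP : IsUnit P) {d : k → 𝕜} (hd : ∀ j, star (d j) = -d j)
    (hAb : Ab = P * diagonal d * P⁻¹) {E : Matrix n k 𝕜} {Cb : Matrix p k 𝕜}
    {Pi' : Matrix n k 𝕜} {Γ : Matrix m k 𝕜} (hPi : Pi' * Ab = A * Pi' + B * Γ + E)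
    (hC : C * Pi' = Cb) :
    ∃ (Piu Λ : Matrix n k 𝕜) (G : Matrix p k 𝕜), Λ * Ab = -(Aᴴ * Λ) + Cᴴ * G ∧
      Piu * Ab = A * Piu - B * W * Bᴴ * Λ + E ∧ C * Piu = Cb := by
  have hdet := (isUnit_iff_isUnit_det P).mp hP
  have hAbP : Ab * P = P * diagonal d := by
    rw [hAb, Matrix.mul_assoc, nonsing_inv_mul P hdet, Matrix.mul_one]
  have hPAb : P⁻¹ * Ab = diagonal d * P⁻¹ := by
    rw [hAb, ← Matrix.mul_assoc, ← Matrix.mul_assoc, nonsing_inv_mul P hdet, Matrix.one_mul]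
  obtain ⟨Piu, Λ, G, h₁, h₂, h₃⟩ := exists_costate_of_mul_diagonal_eq A B C hW hd
    (Pi' := Pi' * P) (Γ := Γ * P) (E := E * P)
    (by rw [Matrix.mul_assoc, ← hAbP, ← Matrix.mul_assoc, hPi]
        simp only [Matrix.add_mul, Matrix.mul_assoc])
    (by rw [← Matrix.mul_assoc, hC])
  refine ⟨Piu * P⁻¹, Λ * P⁻¹, G * P⁻¹, ?_, ?_, ?_⟩
  · rw [Matrix.mul_assoc, hPAb, ← Matrix.mul_assoc, h₁]
    simp only [Matrix.add_mul, Matrix.neg_mul, Matrix.mul_assoc]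
  · rw [Matrix.mul_assoc, hPAb, ← Matrix.mul_assoc, h₂]
    simp only [Matrix.add_mul, Matrix.sub_mul, Matrix.mul_assoc, mul_nonsing_inv P hdet,
      Matrix.mul_one]
  · rw [← Matrix.mul_assoc, h₃, Matrix.mul_assoc, mul_nonsing_inv P hdet, Matrix.mul_one]

section Complexification

variable {l m n : Type*}

theorem Matrix.conjTranspose_map_ofReal_s8 (M : Matrix m n ℝ) :
    (M.map Complex.ofReal)ᴴ = Mᵀ.map Complex.ofReal := by
  ext; simp

theorem Matrix.map_ofReal_map_re (M : Matrix m n ℝ) :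
    (M.map Complex.ofReal).map Complex.re = M := by
  ext; simp

variable [Fintype m]

theorem Matrix.map_ofReal_mul (M : Matrix l m ℝ) (N : Matrix m n ℝ) :
    (M * N).map Complex.ofReal = M.map Complex.ofReal * N.map Complex.ofReal :=
  Matrix.map_mul (f := Complex.ofRealHom)

theorem Matrix.map_re_ofReal_mul (M : Matrix l m ℝ) (X : Matrix m n ℂ) :
    (M.map Complex.ofReal * X).map Complex.re = M * X.map Complex.re := by
  ext i j
  simp [mul_apply, Complex.re_sum]

theorem Matrix.map_re_mul_ofReal (X : Matrix l m ℂ) (M : Matrix m n ℝ) :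
    (X * M.map Complex.ofReal).map Complex.re = X.map Complex.re * M := by
  ext i j
  simp [mul_apply, Complex.re_sum]

theorem Matrix.PosDef.map_ofReal_s8 {R : Matrix m m ℝ} (hR : R.PosDef) :
    (R.map Complex.ofReal).PosDef := by
  have hH : (R.map Complex.ofReal).IsHermitian :=
    hR.isHermitian.map _ fun r => (Complex.conj_ofReal r).symm
  refine .of_dotProduct_mulVec_pos hH fun x hx => ?_
  set a : m → ℝ := fun i => (x i).re
  set b : m → ℝ := fun i => (x i).im
  have hre : (star x ⬝ᵥ (R.map Complex.ofReal *ᵥ x)).re = a ⬝ᵥ (R *ᵥ a) + b ⬝ᵥ (R *ᵥ b) := by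
    simp only [dotProduct, mulVec, Finset.mul_sum, Complex.re_sum, ← Finset.sum_add_distrib]
    refine Finset.sum_congr rfl fun i _ => Finset.sum_congr rfl fun j _ => ?_
    simp [a, b, Complex.mul_re, Complex.mul_im]
  have hquad : ∀ v : m → ℝ, v ≠ 0 → 0 < v ⬝ᵥ (R *ᵥ v) := fun v hv => by
    simpa using hR.dotProduct_mulVec_pos hv
  have hnonneg : ∀ v : m → ℝ, 0 ≤ v ⬝ᵥ (R *ᵥ v) := fun v => by
    simpa using hR.posSemidef.dotProduct_mulVec_nonneg v
  refine Complex.lt_def.mpr ⟨?_, (hH.im_star_dotProduct_mulVec_self x).symm⟩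
  rw [Complex.zero_re, hre]
  by_cases ha : a = 0
  · have hb : b ≠ 0 := fun hb => hx (funext fun i =>
      Complex.ext (congrFun ha i) (congrFun hb i))
    linarith [hquad b hb, hnonneg a]
  · linarith [hquad a ha, hnonneg b]

end Complexification

theorem exists_costate_of_map_ofReal_eq_mul_diagonal_mul_inv {n m p k : Type*} [Fintype n]
    [Fintype m] [Fintype p] [Fintype k] [DecidableEq n] [DecidableEq m] [DecidableEq k]
    (A : Matrix n n ℝ) (B : Matrix n m ℝ) (C : Matrix p n ℝ) {R : Matrix m m ℝ} (hR : R.PosDef)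
    {Ab : Matrix k k ℝ} {P : Matrix k k ℂ} (hP : IsUnit P) {d : k → ℂ} (hd : ∀ j, (d j).re = 0)
    (hAb : Ab.map Complex.ofReal = P * diagonal d * P⁻¹) {E : Matrix n k ℝ} {Cb : Matrix p k ℝ}
    {Pi' : Matrix n k ℝ} {Γ : Matrix m k ℝ} (hPi : Pi' * Ab = A * Pi' + B * Γ + E)
    (hC : C * Pi' = Cb) :
    ∃ (Piu Λ : Matrix n k ℝ) (G : Matrix p k ℝ), Λ * Ab = -(Aᵀ * Λ) + Cᵀ * G ∧
      Piu * Ab = A * Piu - B * R⁻¹ * Bᵀ * Λ + E ∧ C * Piu = Cb := by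
  have hd' : ∀ j, star (d j) = -d j := fun j => Complex.ext (by simp [hd j]) (by simp)
  obtain ⟨Piu, Λ, G, h₁, h₂, h₃⟩ := exists_costate_of_eq_mul_diagonal_mul_inv
    (A.map Complex.ofReal) (B.map Complex.ofReal) (C.map Complex.ofReal)
    (PosDef.map_ofReal_s8 hR.inv) hP hd' hAb (Pi' := Pi'.map Complex.ofReal)
    (Γ := Γ.map Complex.ofReal) (E := E.map Complex.ofReal) (Cb := Cb.map Complex.ofReal)
    (by simpa only [Matrix.map_add _ Complex.ofReal_add, map_ofReal_mul]
      using congrArg (·.map Complex.ofReal) hPi)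
    (by rw [← hC, map_ofReal_mul])
  refine ⟨Piu.map Complex.re, Λ.map Complex.re, G.map Complex.re, ?_, ?_, ?_⟩
  · simpa only [Matrix.map_add _ Complex.add_re, Matrix.map_neg _ Complex.neg_re,
      conjTranspose_map_ofReal_s8, map_re_ofReal_mul, map_re_mul_ofReal]
      using congrArg (·.map Complex.re) h₁
  · simpa only [Matrix.map_add _ Complex.add_re, Matrix.map_sub _ Complex.sub_re,
      conjTranspose_map_ofReal_s8, ← map_ofReal_mul, map_re_ofReal_mul, map_re_mul_ofReal,
      map_ofReal_map_re] using congrArg (·.map Complex.re) h₂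
  · simpa only [map_re_ofReal_mul, map_ofReal_map_re] using congrArg (·.map Complex.re) h₃

/-- Lemma 2 of the paper: the classical regulator equations `RG` are solvable iff the new
regulator equations `RG^u` are solvable. -/
theorem stmt8 {n m p nb : ℕ} (A : Matrix (Fin n) (Fin n) ℝ) (B : Matrix (Fin n) (Fin m) ℝ)
    (C : Matrix (Fin p) (Fin n) ℝ) (Ed : Matrix (Fin n) (Fin nb) ℝ)
    (Dd Cb : Matrix (Fin p) (Fin nb) ℝ) (Ab : Matrix (Fin nb) (Fin nb) ℝ)
    (R : Matrix (Fin m) (Fin m) ℝ) (hR : R.PosDef)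
    (hdiag : ∃ (P : Matrix (Fin nb) (Fin nb) ℂ) (d : Fin nb → ℂ),
      IsUnit P ∧ (∀ i, (d i).re = 0) ∧
        Ab.map Complex.ofReal = P * Matrix.diagonal d * P⁻¹) :
    (∃ (Pi' : Matrix (Fin n) (Fin nb) ℝ) (Γ : Matrix (Fin m) (Fin nb) ℝ),
        Pi' * Ab = A * Pi' + B * Γ + Ed ∧ Cb = C * Pi' + Dd) ↔
    (∃ (Piu Λu : Matrix (Fin n) (Fin nb) ℝ) (Γbu : Matrix (Fin p) (Fin nb) ℝ),
        Λu * Ab = -Aᵀ * Λu + Cᵀ * Γbu ∧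
        Piu * Ab = A * Piu - B * R⁻¹ * Bᵀ * Λu + Ed ∧
        Cb = C * Piu + Dd) := by
  constructor
  · rintro ⟨Pi', Γ, hPi, hC⟩
    obtain ⟨P, d, hP, hd, hAb⟩ := hdiag
    obtain ⟨Piu, Λ, G, h₁, h₂, h₃⟩ := exists_costate_of_map_ofReal_eq_mul_diagonal_mul_inv
      A B C hR hP hd hAb hPi (Cb := Cb - Dd) (by rw [hC, add_sub_cancel_right])
    exact ⟨Piu, Λ, G, by rw [h₁, Matrix.neg_mul], h₂, by rw [h₃, sub_add_cancel]⟩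
  · rintro ⟨Piu, Λu, Γbu, -, hPiu, hC⟩
    refine ⟨Piu, -(R⁻¹ * Bᵀ * Λu), ?_, hC⟩
    rw [hPiu, Matrix.mul_neg, sub_eq_add_neg]
    simp only [Matrix.mul_assoc]
end

section
/- Let Ā ∈ ℝ^{n̄×n̄} be diagonal with purely imaginary diagonal entries and let M ∈ ℝ^{g×n̄}. If x̄(t) = e^{Āt} x̄₀ and (R_{1/2} M, Ā) fails condition rank: suppose after an observability decomposition Ā = diag(Ā₁₁, Ā₂₂) and M = [M₁, 0] with (M₁, Ā₁₁) completely observable, and x̄₀ = (x̄₁(0), x̄₂(0)). Then lim_{T→∞} (1/T)∫₀^T x̄(t)ᵀ Mᵀ M x̄(t) dt > 0 if and only if x̄₁(0) ≠ 0. -/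
/-!
Each output component is a trigonometric polynomial `∑_μ S_μ e^{μt}` over the distinct
eigenvalues `μ` of `Ā₁₁`, with coefficient vector `S_μ = M₁ P_μ x̄₁(0)`, `P_μ` the projection onto
the `μ`-eigenspace. Since `e^{(μ-ν)t}` averages to `0` for `μ ≠ ν` (the exponents are purely
imaginary), the average power is `∑_μ ‖S_μ‖²`. By observability `S_μ = 0` forces the eigenvector
`P_μ x̄₁(0)` to vanish, so the average power vanishes exactly when every `P_μ x̄₁(0)` does,
i.e. when `x̄₁(0) = 0`.
-/

open Matrix Filter Topology Finset ComplexConjugate InnerProductSpace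

theorem tendsto_avg_integral_exp_mul {c : ℂ} (hc : c.re = 0) :
    Tendsto (fun T : ℝ => 1 / (T : ℂ) * ∫ t in (0:ℝ)..T, Complex.exp (c * t)) atTop
      (𝓝 (if c = 0 then 1 else 0)) := by
  split_ifs with h
  · refine tendsto_const_nhds.congr' ?_
    filter_upwards [eventually_ne_atTop 0] with T hT
    have : (T : ℂ) ≠ 0 := by exact_mod_cast hT
    simp [h, this]
  · have hinv : Tendsto (fun T : ℝ => 1 / (T : ℂ)) atTop (𝓝 0) := by
      simpa [Function.comp_def] using
        (Complex.continuous_ofReal.tendsto 0).comp tendsto_inv_atTop_zero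
    have hbdd : IsBoundedUnder (· ≤ ·) atTop
        (fun T : ℝ => ‖∫ t in (0:ℝ)..T, Complex.exp (c * t)‖) := by
      refine isBoundedUnder_of ⟨2 / ‖c‖, fun T => ?_⟩
      have hunit : ∀ t : ℝ, ‖Complex.exp (c * t)‖ = 1 := fun t => by
        simp [Complex.norm_exp, hc]
      rw [integral_exp_mul_complex h, norm_div]
      gcongr
      calc _ ≤ ‖Complex.exp (c * T)‖ + ‖Complex.exp (c * (0:ℝ))‖ := norm_sub_le _ _
        _ = 2 := by rw [hunit, hunit]; norm_num
    exact hinv.zero_mul_isBoundedUnder_le hbdd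

section InnerProductSpace

variable {E : Type*} [NormedAddCommGroup E] [InnerProductSpace ℂ E]

theorem ofReal_norm_sq_sum_exp_smul {s : Finset ℂ} (hs : ∀ μ ∈ s, μ.re = 0) (a : ℂ → E) (t : ℝ) :
    ((‖∑ μ ∈ s, Complex.exp (μ * t) • a μ‖ ^ 2 : ℝ) : ℂ) =
      ∑ μ ∈ s, ∑ ν ∈ s, ⟪a μ, a ν⟫_ℂ * Complex.exp ((ν - μ) * t) := by
  have hnorm : ∀ x : E, ((‖x‖ ^ 2 : ℝ) : ℂ) = ⟪x, x⟫_ℂ := by simp [inner_self_eq_norm_sq_to_K]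
  rw [hnorm, sum_inner]
  refine sum_congr rfl fun μ hμ => ?_
  rw [inner_sum]
  refine sum_congr rfl fun ν _ => ?_
  have hconj : conj (Complex.exp (μ * t)) = Complex.exp (-μ * t) := by
    rw [← Complex.exp_conj, map_mul, Complex.conj_ofReal]
    congr 2
    exact Complex.ext (by simp [hs μ hμ]) (by simp)
  rw [inner_smul_left, inner_smul_right, hconj, ← mul_assoc, mul_comm _ (Complex.exp _),
    ← Complex.exp_add]
  ring_nf

theorem tendsto_avg_integral_norm_sq_sum_exp_smul {s : Finset ℂ} (hs : ∀ μ ∈ s, μ.re = 0)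
    (a : ℂ → E) :
    Tendsto (fun T : ℝ => 1 / T * ∫ t in (0:ℝ)..T, ‖∑ μ ∈ s, Complex.exp (μ * t) • a μ‖ ^ 2)
      atTop (𝓝 (∑ μ ∈ s, ‖a μ‖ ^ 2)) := by
  have havg : ∀ T : ℝ,
      ((1 / T * ∫ t in (0:ℝ)..T, ‖∑ μ ∈ s, Complex.exp (μ * t) • a μ‖ ^ 2 : ℝ) : ℂ) =
        ∑ μ ∈ s, ∑ ν ∈ s, ⟪a μ, a ν⟫_ℂ *
          (1 / (T : ℂ) * ∫ t in (0:ℝ)..T, Complex.exp ((ν - μ) * t)) := by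
    intro T
    rw [Complex.ofReal_mul, ← intervalIntegral.integral_ofReal]
    simp_rw [ofReal_norm_sq_sum_exp_smul hs]
    rw [intervalIntegral.integral_finsetSum fun μ _ =>
      (Continuous.intervalIntegrable (by fun_prop) _ _), mul_sum]
    refine sum_congr rfl fun μ _ => ?_
    rw [intervalIntegral.integral_finsetSum fun ν _ =>
      (Continuous.intervalIntegrable (by fun_prop) _ _), mul_sum]
    refine sum_congr rfl fun ν _ => ?_
    rw [intervalIntegral.integral_const_mul]
    push_cast
    ring
  have hlimit : ∑ μ ∈ s, ∑ ν ∈ s, ⟪a μ, a ν⟫_ℂ * (if ν - μ = 0 then 1 else 0) =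
      ∑ μ ∈ s, ((‖a μ‖ ^ 2 : ℝ) : ℂ) := by
    refine sum_congr rfl fun μ hμ => ?_
    simp [sub_eq_zero, hμ, inner_self_eq_norm_sq_to_K]
  have hcomplex := tendsto_finsetSum s fun μ hμ => tendsto_finsetSum s fun ν hν =>
    (tendsto_avg_integral_exp_mul (c := ν - μ) (by simp [hs μ hμ, hs ν hν])).const_mul ⟪a μ, a ν⟫_ℂ
  rw [hlimit, ← Complex.ofReal_sum, ← funext havg] at hcomplex
  simpa only [Function.comp_def, Complex.ofReal_re] using
    (Complex.continuous_re.tendsto _).comp hcomplex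

end InnerProductSpace

section Diagonal

variable {m n : Type*} [Fintype n]

theorem diagonal_mulVec_indicator_fiber [DecidableEq n] {R : Type*} [CommSemiring R]
    (d : n → R) (μ : R) (x : n → R) :
    diagonal d *ᵥ {j | d j = μ}.indicator x = μ • {j | d j = μ}.indicator x := by
  ext j
  by_cases hj : d j = μ <;> simp [mulVec_diagonal, hj]

theorem sum_image_smul_indicator_fiber {K R M : Type*} [DecidableEq K] [Semiring R]
    [AddCommMonoid M] [Module R M] (d : n → K) (f : K → R) (x : n → M) :
    ∑ μ ∈ univ.image d, f μ • {j | d j = μ}.indicator x = fun j => f (d j) • x j := by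
  ext j
  simp [Finset.sum_apply, Set.indicator_apply]

theorem exists_mulVec_indicator_fiber_ne_zero_iff [DecidableEq n] {R : Type*} [CommSemiring R]
    [DecidableEq R] {d : n → R} {M : Matrix m n R}
    (hobs : ∀ (μ : R) (v : n → R), diagonal d *ᵥ v = μ • v → M *ᵥ v = 0 → v = 0) (x : n → R) :
    (∃ μ ∈ univ.image d, M *ᵥ {j | d j = μ}.indicator x ≠ 0) ↔ x ≠ 0 := by
  constructor
  · rintro ⟨μ, -, hμ⟩ rfl
    simp at hμ
  · intro hx
    obtain ⟨j, hj⟩ := Function.ne_iff.mp hx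
    refine ⟨d j, mem_image_of_mem d (mem_univ j), fun hM => hj ?_⟩
    simpa using congr_fun (hobs _ _ (diagonal_mulVec_indicator_fiber d (d j) x) hM) j

theorem exp_smul_diagonal_mulVec [DecidableEq n] (d : n → ℂ) (t : ℂ) (x : n → ℂ) :
    NormedSpace.exp (t • diagonal d) *ᵥ x = fun j => Complex.exp (d j * t) * x j := by
  rw [← diagonal_smul, Matrix.exp_diagonal]
  ext j
  rw [mulVec_diagonal]
  simp [← Complex.exp_eq_exp_ℂ, mul_comm]

end Diagonal

theorem stmt15_general {n1 n2 g : ℕ} (d1 : Fin n1 → ℂ) (d2 : Fin n2 → ℂ)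
    (hd1 : ∀ i, (d1 i).re = 0)
    (M1 : Matrix (Fin g) (Fin n1) ℂ)
    (hobs : ∀ (μ : ℂ) (v : Fin n1 → ℂ),
      (Matrix.diagonal d1).mulVec v = μ • v → M1.mulVec v = 0 → v = 0)
    (x1 : Fin n1 → ℂ) (x2 : Fin n2 → ℂ) :
    ∃ L : ℝ,
      Filter.Tendsto
        (fun T : ℝ => (1 / T) *
          ∫ t in (0:ℝ)..T, ∑ i,
            ‖(Matrix.fromCols M1 (0 : Matrix (Fin g) (Fin n2) ℂ)).mulVec
              ((NormedSpace.exp ((t : ℂ) •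
                Matrix.fromBlocks (Matrix.diagonal d1) 0 0 (Matrix.diagonal d2))).mulVec
                (Sum.elim x1 x2)) i‖ ^ 2)
        Filter.atTop (nhds L) ∧
      (0 < L ↔ x1 ≠ 0) := by
  set a : ℂ → EuclideanSpace ℂ (Fin g) := fun μ =>
    WithLp.toLp 2 (M1 *ᵥ {j | d1 j = μ}.indicator x1)
  have hy : ∀ t : ℝ, ∑ i, ‖(fromCols M1 (0 : Matrix (Fin g) (Fin n2) ℂ) *ᵥ
      (NormedSpace.exp ((t : ℂ) • fromBlocks (diagonal d1) 0 0 (diagonal d2)) *ᵥ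
        Sum.elim x1 x2)) i‖ ^ 2 = ‖∑ μ ∈ univ.image d1, Complex.exp (μ * t) • a μ‖ ^ 2 := by
    intro t
    rw [fromBlocks_diagonal, exp_smul_diagonal_mulVec, fromCols_mulVec, EuclideanSpace.norm_sq_eq]
    simp only [a, ← WithLp.toLp_smul, ← WithLp.toLp_sum, ← mulVec_smul, ← mulVec_sum,
      sum_image_smul_indicator_fiber]
    simp [Function.comp_def]
  refine ⟨∑ μ ∈ univ.image d1, ‖a μ‖ ^ 2, ?_, ?_⟩
  · simp_rw [hy]
    exact tendsto_avg_integral_norm_sq_sum_exp_smul (by simpa using hd1) a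
  · rw [sum_pos_iff_of_nonneg (fun _ _ => by positivity),
      ← exists_mulVec_indicator_fiber_ne_zero_iff hobs]
    simp [a, sq_pos_iff]

/-- Lemma A.1 (both cases): after an observability decomposition
`Ā = diag(Ā₁₁, Ā₂₂)`, `M = [M₁, 0]` with `(M₁, Ā₁₁)` completely observable and all diagonal
entries purely imaginary, the average output power is positive iff the observable part
`x̄₁(0)` of the initial condition is nonzero. -/
theorem stmt15 {n1 n2 g : ℕ} (d1 : Fin n1 → ℂ) (d2 : Fin n2 → ℂ)
    (hd1 : ∀ i, (d1 i).re = 0) (hd2 : ∀ i, (d2 i).re = 0)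
    (M1 : Matrix (Fin g) (Fin n1) ℂ)
    (hobs : ∀ (μ : ℂ) (v : Fin n1 → ℂ),
      (Matrix.diagonal d1).mulVec v = μ • v → M1.mulVec v = 0 → v = 0)
    (x1 : Fin n1 → ℂ) (x2 : Fin n2 → ℂ) :
    ∃ L : ℝ,
      Filter.Tendsto
        (fun T : ℝ => (1 / T) *
          ∫ t in (0:ℝ)..T, ∑ i,
            ‖(Matrix.fromCols M1 (0 : Matrix (Fin g) (Fin n2) ℂ)).mulVec
              ((NormedSpace.exp ((t : ℂ) •
                Matrix.fromBlocks (Matrix.diagonal d1) 0 0 (Matrix.diagonal d2))).mulVec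
                (Sum.elim x1 x2)) i‖ ^ 2)
        Filter.atTop (nhds L) ∧
      (0 < L ↔ x1 ≠ 0) :=
  stmt15_general d1 d2 hd1 M1 hobs x1 x2
end
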